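/- arXiv:2201.04700 — 5 statements merged into one kernel-verified Lean document; each statement's English description precedes it below -/
import Mathlib

section
/- Let G be a compact Hausdorff topological group with normalized Haar probability measure μ_H, and let p', p'', p : G → ℝ be continuous central functions satisfying the semigroup conditions. Then for all G₁, G₂, G₃, G₄ ∈ G, ∫∫∫∫ p'(X₁X₄⁻¹G₄⁻¹) · p'(X₁⁻¹G₁G₂X₂) · p'(X₃G₃⁻¹X₄) · p'(X₂⁻¹X₃⁻¹) dμ_H(X₁) dμ_H(X₂) dμ_H(X₃) dμ_H(X₄) = p(G₃⁻¹G₄⁻¹G₁G₂). (Consistency of the plaquette measure under subdivision of one plaquette into four plaquettes.) -/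
/-!
The interior edges are integrated out one at a time, each integration being a semigroup
condition once centrality has rotated the arguments into the shape `f (g * x) * f (x⁻¹ * h)`:
`X₄` merges two factors `p'` into a `p''`; after swapping the `X₂`- and `X₃`-integrals
(Fubini for a continuous integrand on a compact space), `X₂` merges the other two; `X₃` merges
the two factors `p''` into `p (G₃⁻¹ * G₄⁻¹ * G₁ * G₂)`, which no longer depends on `X₁`.
-/

open MeasureTheory

section Central

variable {G : Type*} [Group G] [MeasurableSpace G] (μ : Measure G) {f f'' : G → ℝ}

theorem integral_mul_mul_inv_mul_of_central (hf : ∀ x y : G, f (x * y) = f (y * x))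
    (hs : ∀ g h : G, ∫ x, f (g * x) * f (x⁻¹ * h) ∂μ = f'' (g * h)) (a b c : G) :
    ∫ x, f (a * x) * f (b * x⁻¹ * c) ∂μ = f'' (a * (c * b)) := by
  have hrot : ∀ x, f (b * x⁻¹ * c) = f (x⁻¹ * (c * b)) := fun x => by
    rw [mul_assoc, hf, mul_assoc]
  simp_rw [hrot]
  exact hs a (c * b)

theorem integral_mul_inv_mul_mul_of_central (hf : ∀ x y : G, f (x * y) = f (y * x))
    (hs : ∀ g h : G, ∫ x, f (g * x) * f (x⁻¹ * h) ∂μ = f'' (g * h)) (a b : G) :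
    ∫ x, f (a * x⁻¹) * f (x * b) ∂μ = f'' (b * a) := by
  have hrot : ∀ x, f (a * x⁻¹) * f (x * b) = f (b * x) * f (x⁻¹ * a) := fun x => by
    rw [hf a, hf x, mul_comm]
  simp_rw [hrot]
  exact hs b a

end Central

theorem plaquette_subdivision_consistency_general
    {G : Type*} [Group G] [TopologicalSpace G] [IsTopologicalGroup G]
    [CompactSpace G] [MeasurableSpace G] [BorelSpace G]
    (μ : Measure G) [IsProbabilityMeasure μ]
    (p' p'' p : G → ℝ)
    (hp'cont : Continuous p') (hp''cont : Continuous p'')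
    (hp'central : ∀ x y : G, p' (x * y) = p' (y * x))
    (hp''central : ∀ x y : G, p'' (x * y) = p'' (y * x))
    (hsemi1 : ∀ g h : G, ∫ x, p' (g * x) * p' (x⁻¹ * h) ∂μ = p'' (g * h))
    (hsemi2 : ∀ g h : G, ∫ x, p'' (g * x) * p'' (x⁻¹ * h) ∂μ = p (g * h))
    (G₁ G₂ G₃ G₄ : G) :
    (∫ X₁, ∫ X₂, ∫ X₃, ∫ X₄,
        p' (X₁ * X₄⁻¹ * G₄⁻¹) * p' (X₁⁻¹ * G₁ * G₂ * X₂) *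
          p' (X₃ * G₃⁻¹ * X₄) * p' (X₂⁻¹ * X₃⁻¹) ∂μ ∂μ ∂μ ∂μ) =
      p (G₃⁻¹ * G₄⁻¹ * G₁ * G₂) := by
  have h₄ : ∀ X₁ X₂ X₃, ∫ X₄, p' (X₁ * X₄⁻¹ * G₄⁻¹) * p' (X₁⁻¹ * G₁ * G₂ * X₂) *
        p' (X₃ * G₃⁻¹ * X₄) * p' (X₂⁻¹ * X₃⁻¹) ∂μ =
      p' (X₁⁻¹ * G₁ * G₂ * X₂) * p' (X₂⁻¹ * X₃⁻¹) * p'' (X₃ * (G₃⁻¹ * (G₄⁻¹ * X₁))) := by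
    intro X₁ X₂ X₃
    rw [← mul_assoc X₃, ← integral_mul_mul_inv_mul_of_central μ hp'central hsemi1,
      ← integral_const_mul]
    congr 1 with X₄
    ring
  have h₂ : ∀ X₁ X₃, ∫ X₂, p' (X₁⁻¹ * G₁ * G₂ * X₂) * p' (X₂⁻¹ * X₃⁻¹) *
        p'' (X₃ * (G₃⁻¹ * (G₄⁻¹ * X₁))) ∂μ =
      p'' (X₁⁻¹ * G₁ * G₂ * X₃⁻¹) * p'' (X₃ * (G₃⁻¹ * (G₄⁻¹ * X₁))) := fun X₁ X₃ => by
    rw [integral_mul_const, hsemi1]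
  have h₃ : ∀ X₁, ∫ X₃, p'' (X₁⁻¹ * G₁ * G₂ * X₃⁻¹) * p'' (X₃ * (G₃⁻¹ * (G₄⁻¹ * X₁))) ∂μ =
      p (G₃⁻¹ * G₄⁻¹ * G₁ * G₂) := by
    intro X₁
    rw [integral_mul_inv_mul_mul_of_central μ hp''central hsemi2]
    congr 1
    group
  calc _ = ∫ X₁, ∫ X₂, ∫ X₃, p' (X₁⁻¹ * G₁ * G₂ * X₂) * p' (X₂⁻¹ * X₃⁻¹) *
        p'' (X₃ * (G₃⁻¹ * (G₄⁻¹ * X₁))) ∂μ ∂μ ∂μ := by simp only [h₄]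
    _ = ∫ X₁, ∫ X₃, ∫ X₂, p' (X₁⁻¹ * G₁ * G₂ * X₂) * p' (X₂⁻¹ * X₃⁻¹) *
        p'' (X₃ * (G₃⁻¹ * (G₄⁻¹ * X₁))) ∂μ ∂μ ∂μ := by
      congr 1 with X₁
      exact integral_integral_swap_of_hasCompactSupport (by fun_prop)
        (HasCompactSupport.of_compactSpace _)
    _ = p (G₃⁻¹ * G₄⁻¹ * G₁ * G₂) := by simp only [h₂, h₃, integral_const, probReal_univ, one_smul]

/-- **Consistency of the plaquette measure under subdivision of one plaquette into four.**
For a compact Hausdorff topological group `G` with normalized Haar probability measure `μ`,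
and continuous central functions `p', p'', p : G → ℝ` satisfying the semigroup conditions,
the integral over the four interior edge variables of the product of the four small-plaquette
densities reproduces the large-plaquette density `p (G₃⁻¹ G₄⁻¹ G₁ G₂)`. -/
theorem plaquette_subdivision_consistency
    {G : Type*} [Group G] [TopologicalSpace G] [IsTopologicalGroup G]
    [CompactSpace G] [T2Space G] [MeasurableSpace G] [BorelSpace G]
    (μ : Measure G) [μ.IsHaarMeasure] [IsProbabilityMeasure μ]
    (p' p'' p : G → ℝ)
    (hp'cont : Continuous p') (hp''cont : Continuous p'') (hpcont : Continuous p)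
    (hp'central : ∀ x y : G, p' (x * y) = p' (y * x))
    (hp''central : ∀ x y : G, p'' (x * y) = p'' (y * x))
    (hpcentral : ∀ x y : G, p (x * y) = p (y * x))
    (hsemi1 : ∀ g h : G, ∫ x, p' (g * x) * p' (x⁻¹ * h) ∂μ = p'' (g * h))
    (hsemi2 : ∀ g h : G, ∫ x, p'' (g * x) * p'' (x⁻¹ * h) ∂μ = p (g * h))
    (G₁ G₂ G₃ G₄ : G) :
    (∫ X₁, ∫ X₂, ∫ X₃, ∫ X₄,
        p' (X₁ * X₄⁻¹ * G₄⁻¹) * p' (X₁⁻¹ * G₁ * G₂ * X₂) *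
          p' (X₃ * G₃⁻¹ * X₄) * p' (X₂⁻¹ * X₃⁻¹) ∂μ ∂μ ∂μ ∂μ) =
      p (G₃⁻¹ * G₄⁻¹ * G₁ * G₂) :=
  plaquette_subdivision_consistency_general μ p' p'' p hp'cont hp''cont hp'central hp''central
    hsemi1 hsemi2 G₁ G₂ G₃ G₄
end

section
/- Let G be a compact Hausdorff topological group with normalized Haar probability measure μ_H, and let p', p'', p : G → ℝ be continuous central functions satisfying the semigroup conditions. Then for all G₁, G₂, G₃, G₄, H₁, H₂, H₃ ∈ G, the integral over the fifteen variables g₁, g₂, g₃, g₄, y₁, y₂, y₃, y₄, z₁, z₂, z₃, z₄, h₁, h₂, h₃ (each with respect to μ_H) of the product p'(g₁y₁y₄⁻¹g₄G₄⁻¹) · p'(g₁⁻¹G₁G₂g₂⁻¹y₂⁻¹y₁⁻¹) · p'(y₄y₃g₃G₃⁻¹g₄⁻¹) · p'(y₂g₂g₃⁻¹y₃⁻¹) · p'(h₁z₁z₄⁻¹g₂G₂⁻¹) · p'(h₁⁻¹H₁H₂h₂⁻¹z₂⁻¹z₁⁻¹) · p'(z₄z₃h₃H₃⁻¹g₂⁻¹)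 · p'(z₂h₂h₃⁻¹z₃⁻¹) equals p(G₃⁻¹G₄⁻¹G₁G₂) · p(H₃⁻¹G₂⁻¹H₁H₂). (Consistency of the plaquette measure under simultaneous subdivision of two contiguous plaquettes sharing the common edge G₂.) -/
/-!
Write `f ⋆ g` for the convolution `w ↦ ∫ x, f x * g (x⁻¹ * w) ∂μ`; the semigroup conditions say
`p'' = p' ⋆ p'` and `p = p'' ⋆ p''`. Haar measure on a compact group is bi-invariant, so
convolutions of class functions are class functions, and by Fubini convolution is associative.
Integrating out a variable that occurs in exactly two small plaquettes replaces their two weights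
by the convolution of these weights. After three such steps inside each subdivided plaquette,
only `p` evaluated at a conjugate of the large plaquette's boundary word is left, and the
remaining variables integrate to `1`. The half `g₂` of the common edge is one of those remaining
variables for the second plaquette, so the integral factors.
-/

open MeasureTheory

def IsClassFunction {G R : Type*} [Mul G] (f : G → R) : Prop :=
  ∀ x y, f (x * y) = f (y * x)

theorem IsClassFunction.apply_conj {G R : Type*} [Group G] {f : G → R} (hf : IsClassFunction f)
    (u v : G) : f (u * v * u⁻¹) = f v := by
  rw [hf, inv_mul_cancel_left]

theorem IsClassFunction.apply_eq_of_eq_conj {G R : Type*} [Group G] {f : G → R}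
    (hf : IsClassFunction f) {w w' : G} (c : G) (h : w = c * w' * c⁻¹) : f w = f w' :=
  h ▸ hf.apply_conj c w'

noncomputable def mconvolution {G : Type*} [Mul G] [Inv G] [MeasurableSpace G]
    (f g : G → ℝ) (μ : Measure G) : G → ℝ :=
  fun x ↦ ∫ y, f y * g (y⁻¹ * x) ∂μ

local notation:67 f " ⋆ₘ[" μ:67 "] " g:66 => mconvolution f g μ

section Convolution

variable {G : Type*} [Group G] [MeasurableSpace G] [MeasurableMul G] {μ : Measure G}
  {f g h : G → ℝ}

theorem integral_mul_left_eq_mconvolution [μ.IsMulLeftInvariant] (a b : G) :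
    ∫ x, f (a * x) * g (x⁻¹ * b) ∂μ = (f ⋆ₘ[μ] g) (a * b) := by
  rw [mconvolution, ← integral_mul_left_eq_self (fun y ↦ f y * g (y⁻¹ * (a * b))) a]
  simp only [mul_inv_rev, mul_assoc, inv_mul_cancel_left]

theorem IsClassFunction.integral_eq_mconvolution [μ.IsMulLeftInvariant] (hf : IsClassFunction f)
    (hg : IsClassFunction g) (u v s t : G) :
    ∫ x, f (u * x * v) * g (s * x⁻¹ * t) ∂μ = (f ⋆ₘ[μ] g) (v * u * (t * s)) := by
  have hfx : ∀ x, f (u * x * v) = f (v * u * x) := fun x ↦ by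
    rw [hf, ← mul_assoc]
  have hgx : ∀ x, g (s * x⁻¹ * t) = g (x⁻¹ * (t * s)) := fun x ↦ by
    rw [hg, ← mul_assoc, hg]
  simp only [hfx, hgx, integral_mul_left_eq_mconvolution]

theorem IsClassFunction.mconvolution [μ.IsMulLeftInvariant] [μ.IsMulRightInvariant]
    (hf : IsClassFunction f) (hg : IsClassFunction g) : IsClassFunction (f ⋆ₘ[μ] g) := by
  intro u v
  -- substitute `y ↦ v⁻¹ * y * v`, which preserves `μ` and `f`
  calc (f ⋆ₘ[μ] g) (u * v)
      = ∫ y, f (v⁻¹ * (y * v)) * g ((v⁻¹ * (y * v))⁻¹ * (u * v)) ∂μ := by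
        rw [integral_mul_right_eq_self (fun y ↦ f (v⁻¹ * y) * g ((v⁻¹ * y)⁻¹ * (u * v))),
          integral_mul_left_eq_self (fun y ↦ f y * g (y⁻¹ * (u * v)))]
        rfl
    _ = (f ⋆ₘ[μ] g) (v * u) := by
        congr 1 with y
        rw [show v⁻¹ * (y * v) = v⁻¹ * y * v⁻¹⁻¹ by group, hf.apply_conj,
          show (v⁻¹ * y * v⁻¹⁻¹)⁻¹ * (u * v) = v⁻¹ * (y⁻¹ * (v * u)) * v⁻¹⁻¹ by group,
          hg.apply_conj]

theorem mconvolution_assoc [TopologicalSpace G] [IsTopologicalGroup G] [CompactSpace G]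
    [BorelSpace G] [IsFiniteMeasureOnCompacts μ] [μ.IsMulLeftInvariant]
    (hf : Continuous f) (hg : Continuous g) (hh : Continuous h) :
    (f ⋆ₘ[μ] g) ⋆ₘ[μ] h = f ⋆ₘ[μ] (g ⋆ₘ[μ] h) := by
  funext w
  have hcont : Continuous (Function.uncurry fun x y : G ↦ f y * g (y⁻¹ * x) * h (x⁻¹ * w)) := by
    fun_prop
  calc ((f ⋆ₘ[μ] g) ⋆ₘ[μ] h) w
      = ∫ x, ∫ y, f y * g (y⁻¹ * x) * h (x⁻¹ * w) ∂μ ∂μ := by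
        simp only [mconvolution, integral_mul_const]
    _ = ∫ y, ∫ x, f y * g (y⁻¹ * x) * h (x⁻¹ * w) ∂μ ∂μ :=
        integral_integral_swap_of_hasCompactSupport hcont (.of_compactSpace _)
    _ = (f ⋆ₘ[μ] (g ⋆ₘ[μ] h)) w := by
        simp only [mul_assoc, integral_const_mul, integral_mul_left_eq_mconvolution, mconvolution]

end Convolution

instance isMulRightInvariant_of_isProbabilityMeasure {G : Type*} [Group G] [TopologicalSpace G]
    [IsTopologicalGroup G] [CompactSpace G] [MeasurableSpace G] [BorelSpace G] (μ : Measure G)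
    [μ.IsHaarMeasure] [IsProbabilityMeasure μ] : μ.IsMulRightInvariant where
  map_mul_right_eq_self g := by
    have : IsProbabilityMeasure (μ.map (· * g)) :=
      Measure.isProbabilityMeasure_map (measurable_mul_const g).aemeasurable
    exact Measure.isHaarMeasure_eq_of_isProbabilityMeasure _ μ

/-- The product of the weights of the four plaquettes into which a plaquette with boundary word
`A₃⁻¹ * A₄⁻¹ * A₁ * A₂` is cut: each boundary edge `Aᵢ` is split into two halves, one of which
is `xᵢ`, and `y₁, …, y₄` are the new interior edges. -/
def subdividedPlaquetteWeight {G : Type*} [Group G] (f : G → ℝ)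
    (A₁ A₂ A₃ A₄ x₁ x₂ x₃ x₄ y₁ y₂ y₃ y₄ : G) : ℝ :=
  f (x₁ * y₁ * y₄⁻¹ * x₄ * A₄⁻¹) * f (x₁⁻¹ * A₁ * A₂ * x₂⁻¹ * y₂⁻¹ * y₁⁻¹) *
    f (y₄ * y₃ * x₃ * A₃⁻¹ * x₄⁻¹) * f (y₂ * x₂ * x₃⁻¹ * y₃⁻¹)

section Plaquette

variable {G : Type*} [Group G] [TopologicalSpace G] [IsTopologicalGroup G] [CompactSpace G]
  [MeasurableSpace G] [BorelSpace G] {μ : Measure G} [μ.IsHaarMeasure] [IsProbabilityMeasure μ]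
  {f : G → ℝ}

theorem integral_subdividedPlaquetteWeight_boundary_first (hf : IsClassFunction f)
    (hfc : Continuous f) (hffc : Continuous (f ⋆ₘ[μ] f)) (A₁ A₂ A₃ A₄ x₄ : G) :
    ∫ y₁, ∫ y₂, ∫ y₃, ∫ y₄, ∫ x₁, ∫ x₂, ∫ x₃,
      subdividedPlaquetteWeight f A₁ A₂ A₃ A₄ x₁ x₂ x₃ x₄ y₁ y₂ y₃ y₄ ∂μ ∂μ ∂μ ∂μ ∂μ ∂μ ∂μ =
      ((f ⋆ₘ[μ] f) ⋆ₘ[μ] (f ⋆ₘ[μ] f)) (A₃⁻¹ * A₄⁻¹ * A₁ * A₂) := by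
  set f₂ := f ⋆ₘ[μ] f
  have hf₂ : IsClassFunction f₂ := hf.mconvolution hf
  have hassoc : f ⋆ₘ[μ] (f₂ ⋆ₘ[μ] f) = f₂ ⋆ₘ[μ] f₂ := by
    rw [← mconvolution_assoc hfc hffc hfc, ← mconvolution_assoc hfc hfc hfc,
      mconvolution_assoc hffc hfc hfc]
  have hx₃ (y₁ y₂ y₃ y₄ x₁ x₂ : G) : ∫ x₃,
      subdividedPlaquetteWeight f A₁ A₂ A₃ A₄ x₁ x₂ x₃ x₄ y₁ y₂ y₃ y₄ ∂μ =
      f (x₁ * y₁ * y₄⁻¹ * x₄ * A₄⁻¹) * f (x₁⁻¹ * A₁ * A₂ * x₂⁻¹ * y₂⁻¹ * y₁⁻¹) *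
        f₂ (A₃⁻¹ * x₄⁻¹ * y₄ * y₂ * x₂) := by
    calc _ = ∫ x₃, f (x₁ * y₁ * y₄⁻¹ * x₄ * A₄⁻¹) * f (x₁⁻¹ * A₁ * A₂ * x₂⁻¹ * y₂⁻¹ * y₁⁻¹) *
          (f (y₄ * y₃ * x₃ * (A₃⁻¹ * x₄⁻¹)) * f (y₂ * x₂ * x₃⁻¹ * y₃⁻¹)) ∂μ := by
          simp only [subdividedPlaquetteWeight, mul_assoc, mul_comm, mul_left_comm]
      _ = _ := by
          rw [integral_const_mul, hf.integral_eq_mconvolution hf]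
          congr 2
          group
  have hx₂ (y₁ y₂ y₄ x₁ : G) : ∫ x₂,
      f (x₁ * y₁ * y₄⁻¹ * x₄ * A₄⁻¹) * f (x₁⁻¹ * A₁ * A₂ * x₂⁻¹ * y₂⁻¹ * y₁⁻¹) *
        f₂ (A₃⁻¹ * x₄⁻¹ * y₄ * y₂ * x₂) ∂μ =
      f (x₁ * y₁ * y₄⁻¹ * x₄ * A₄⁻¹) * (f₂ ⋆ₘ[μ] f) (A₃⁻¹ * x₄⁻¹ * y₄ * y₁⁻¹ * x₁⁻¹ * A₁ * A₂) := by
    calc _ = ∫ x₂, f (x₁ * y₁ * y₄⁻¹ * x₄ * A₄⁻¹) *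
          (f₂ (A₃⁻¹ * x₄⁻¹ * y₄ * y₂ * x₂ * 1) * f (x₁⁻¹ * A₁ * A₂ * x₂⁻¹ * (y₂⁻¹ * y₁⁻¹))) ∂μ := by
          simp only [mul_assoc, mul_one, mul_comm, mul_left_comm]
      _ = _ := by
          rw [integral_const_mul, hf₂.integral_eq_mconvolution hf]
          group
  have hx₁ (y₁ y₄ : G) : ∫ x₁, f (x₁ * y₁ * y₄⁻¹ * x₄ * A₄⁻¹) *
      (f₂ ⋆ₘ[μ] f) (A₃⁻¹ * x₄⁻¹ * y₄ * y₁⁻¹ * x₁⁻¹ * A₁ * A₂) ∂μ =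
      (f₂ ⋆ₘ[μ] f₂) (A₃⁻¹ * A₄⁻¹ * A₁ * A₂) := by
    calc _ = ∫ x₁, f (1 * x₁ * (y₁ * y₄⁻¹ * x₄ * A₄⁻¹)) *
          (f₂ ⋆ₘ[μ] f) (A₃⁻¹ * x₄⁻¹ * y₄ * y₁⁻¹ * x₁⁻¹ * (A₁ * A₂)) ∂μ := by
          simp only [mul_assoc, one_mul]
      _ = _ := by
          rw [hf.integral_eq_mconvolution (hf₂.mconvolution hf), hassoc]
          exact (hf₂.mconvolution hf₂).apply_eq_of_eq_conj (y₁ * y₄⁻¹ * x₄ * A₃) (by group)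
  simp only [hx₃, hx₂, hx₁, integral_const, probReal_univ, one_smul]

theorem integral_subdividedPlaquetteWeight_interior_first (hf : IsClassFunction f)
    (hfc : Continuous f) (hffc : Continuous (f ⋆ₘ[μ] f)) (A₁ A₂ A₃ A₄ : G) :
    ∫ x₁, ∫ x₂, ∫ x₃, ∫ x₄, ∫ y₁, ∫ y₂, ∫ y₃, ∫ y₄,
      subdividedPlaquetteWeight f A₁ A₂ A₃ A₄ x₁ x₂ x₃ x₄ y₁ y₂ y₃ y₄ ∂μ ∂μ ∂μ ∂μ ∂μ ∂μ ∂μ ∂μ =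
      ((f ⋆ₘ[μ] f) ⋆ₘ[μ] (f ⋆ₘ[μ] f)) (A₃⁻¹ * A₄⁻¹ * A₁ * A₂) := by
  set f₂ := f ⋆ₘ[μ] f
  have hf₂ : IsClassFunction f₂ := hf.mconvolution hf
  have hy₄ (x₁ x₂ x₃ x₄ y₁ y₂ y₃ : G) : ∫ y₄,
      subdividedPlaquetteWeight f A₁ A₂ A₃ A₄ x₁ x₂ x₃ x₄ y₁ y₂ y₃ y₄ ∂μ =
      f (x₁⁻¹ * A₁ * A₂ * x₂⁻¹ * y₂⁻¹ * y₁⁻¹) * f (y₂ * x₂ * x₃⁻¹ * y₃⁻¹) *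
        f₂ (y₃ * x₃ * A₃⁻¹ * A₄⁻¹ * x₁ * y₁) := by
    calc _ = ∫ y₄, f (x₁⁻¹ * A₁ * A₂ * x₂⁻¹ * y₂⁻¹ * y₁⁻¹) * f (y₂ * x₂ * x₃⁻¹ * y₃⁻¹) *
          (f (1 * y₄ * (y₃ * x₃ * A₃⁻¹ * x₄⁻¹)) * f (x₁ * y₁ * y₄⁻¹ * (x₄ * A₄⁻¹))) ∂μ := by
          simp only [subdividedPlaquetteWeight, mul_assoc, one_mul, mul_comm, mul_left_comm]
      _ = _ := by
          rw [integral_const_mul, hf.integral_eq_mconvolution hf]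
          congr 2
          group
  have hy₃ (x₁ x₂ x₃ y₁ y₂ : G) : ∫ y₃,
      f (x₁⁻¹ * A₁ * A₂ * x₂⁻¹ * y₂⁻¹ * y₁⁻¹) * f (y₂ * x₂ * x₃⁻¹ * y₃⁻¹) *
        f₂ (y₃ * x₃ * A₃⁻¹ * A₄⁻¹ * x₁ * y₁) ∂μ =
      f (x₁⁻¹ * A₁ * A₂ * x₂⁻¹ * y₂⁻¹ * y₁⁻¹) *
        (f₂ ⋆ₘ[μ] f) (x₃ * A₃⁻¹ * A₄⁻¹ * x₁ * y₁ * y₂ * x₂ * x₃⁻¹) := by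
    calc _ = ∫ y₃, f (x₁⁻¹ * A₁ * A₂ * x₂⁻¹ * y₂⁻¹ * y₁⁻¹) *
          (f₂ (1 * y₃ * (x₃ * A₃⁻¹ * A₄⁻¹ * x₁ * y₁)) * f (y₂ * x₂ * x₃⁻¹ * y₃⁻¹ * 1)) ∂μ := by
          simp only [mul_assoc, mul_one, one_mul, mul_comm, mul_left_comm]
      _ = _ := by
          rw [integral_const_mul, hf₂.integral_eq_mconvolution hf]
          group
  have hy₂ (x₁ x₂ x₃ y₁ : G) : ∫ y₂, f (x₁⁻¹ * A₁ * A₂ * x₂⁻¹ * y₂⁻¹ * y₁⁻¹) *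
      (f₂ ⋆ₘ[μ] f) (x₃ * A₃⁻¹ * A₄⁻¹ * x₁ * y₁ * y₂ * x₂ * x₃⁻¹) ∂μ =
      (f₂ ⋆ₘ[μ] f₂) (A₃⁻¹ * A₄⁻¹ * A₁ * A₂) := by
    calc _ = ∫ y₂, (f₂ ⋆ₘ[μ] f) (x₃ * A₃⁻¹ * A₄⁻¹ * x₁ * y₁ * y₂ * (x₂ * x₃⁻¹)) *
          f (x₁⁻¹ * A₁ * A₂ * x₂⁻¹ * y₂⁻¹ * y₁⁻¹) ∂μ := by
          simp only [mul_assoc, mul_comm]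
      _ = _ := by
          rw [(hf₂.mconvolution hf).integral_eq_mconvolution hf, mconvolution_assoc hffc hfc hfc]
          exact (hf₂.mconvolution hf₂).apply_eq_of_eq_conj x₂ (by group)
  simp only [hy₄, hy₃, hy₂, integral_const, probReal_univ, one_smul]

end Plaquette

theorem two_contiguous_plaquettes_subdivision_consistency_general
    {G : Type*} [Group G] [TopologicalSpace G] [IsTopologicalGroup G]
    [CompactSpace G] [MeasurableSpace G] [BorelSpace G]
    (μ : Measure G) [μ.IsHaarMeasure] [IsProbabilityMeasure μ]
    (p' p'' p : G → ℝ)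
    (hp'cont : Continuous p') (hp''cont : Continuous p'')
    (hp'central : ∀ x y : G, p' (x * y) = p' (y * x))
    (hsemi1 : ∀ g h : G, ∫ x, p' (g * x) * p' (x⁻¹ * h) ∂μ = p'' (g * h))
    (hsemi2 : ∀ g h : G, ∫ x, p'' (g * x) * p'' (x⁻¹ * h) ∂μ = p (g * h))
    (G₁ G₂ G₃ G₄ H₁ H₂ H₃ : G) :
    (∫ g₁, ∫ g₂, ∫ g₃, ∫ g₄, ∫ y₁, ∫ y₂, ∫ y₃, ∫ y₄, ∫ z₁, ∫ z₂, ∫ z₃, ∫ z₄, ∫ h₁, ∫ h₂, ∫ h₃,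
        p' (g₁ * y₁ * y₄⁻¹ * g₄ * G₄⁻¹) * p' (g₁⁻¹ * G₁ * G₂ * g₂⁻¹ * y₂⁻¹ * y₁⁻¹) *
          p' (y₄ * y₃ * g₃ * G₃⁻¹ * g₄⁻¹) * p' (y₂ * g₂ * g₃⁻¹ * y₃⁻¹) *
          p' (h₁ * z₁ * z₄⁻¹ * g₂ * G₂⁻¹) * p' (h₁⁻¹ * H₁ * H₂ * h₂⁻¹ * z₂⁻¹ * z₁⁻¹) *
          p' (z₄ * z₃ * h₃ * H₃⁻¹ * g₂⁻¹) * p' (z₂ * h₂ * h₃⁻¹ * z₃⁻¹)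
        ∂μ ∂μ ∂μ ∂μ ∂μ ∂μ ∂μ ∂μ ∂μ ∂μ ∂μ ∂μ ∂μ ∂μ ∂μ) =
      p (G₃⁻¹ * G₄⁻¹ * G₁ * G₂) * p (H₃⁻¹ * G₂⁻¹ * H₁ * H₂) := by
  obtain rfl : p'' = p' ⋆ₘ[μ] p' :=
    funext fun h ↦ by simpa [mconvolution] using (hsemi1 1 h).symm
  obtain rfl : p = (p' ⋆ₘ[μ] p') ⋆ₘ[μ] (p' ⋆ₘ[μ] p') :=
    funext fun h ↦ by simpa [mconvolution] using (hsemi2 1 h).symm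
  have hsplit : ∀ g₁ g₂ g₃ g₄ y₁ y₂ y₃ y₄ z₁ z₂ z₃ z₄ h₁ h₂ h₃ : G,
      p' (g₁ * y₁ * y₄⁻¹ * g₄ * G₄⁻¹) * p' (g₁⁻¹ * G₁ * G₂ * g₂⁻¹ * y₂⁻¹ * y₁⁻¹) *
          p' (y₄ * y₃ * g₃ * G₃⁻¹ * g₄⁻¹) * p' (y₂ * g₂ * g₃⁻¹ * y₃⁻¹) *
          p' (h₁ * z₁ * z₄⁻¹ * g₂ * G₂⁻¹) * p' (h₁⁻¹ * H₁ * H₂ * h₂⁻¹ * z₂⁻¹ * z₁⁻¹) *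
          p' (z₄ * z₃ * h₃ * H₃⁻¹ * g₂⁻¹) * p' (z₂ * h₂ * h₃⁻¹ * z₃⁻¹) =
        subdividedPlaquetteWeight p' G₁ G₂ G₃ G₄ g₁ g₂ g₃ g₄ y₁ y₂ y₃ y₄ *
          subdividedPlaquetteWeight p' H₁ H₂ H₃ G₂ h₁ h₂ h₃ g₂ z₁ z₂ z₃ z₄ := by
    intros
    simp only [subdividedPlaquetteWeight]
    ring
  simp only [hsplit, integral_const_mul,
    integral_subdividedPlaquetteWeight_boundary_first hp'central hp'cont hp''cont,
    integral_mul_const,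
    integral_subdividedPlaquetteWeight_interior_first hp'central hp'cont hp''cont]

/-- **Consistency of the plaquette measure under simultaneous subdivision of two contiguous
plaquettes sharing the common edge `G₂`.**  For a compact Hausdorff topological group `G` with
normalized Haar probability measure `μ`, and continuous central functions `p', p'', p : G → ℝ`
satisfying the semigroup conditions, the integral over the fifteen interior variables of the
product of the eight small-plaquette densities equals the product of the two large-plaquette
densities `p (G₃⁻¹ G₄⁻¹ G₁ G₂) · p (H₃⁻¹ G₂⁻¹ H₁ H₂)`. -/
theorem two_contiguous_plaquettes_subdivision_consistency
    {G : Type*} [Group G] [TopologicalSpace G] [IsTopologicalGroup G]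
    [CompactSpace G] [T2Space G] [MeasurableSpace G] [BorelSpace G]
    (μ : Measure G) [μ.IsHaarMeasure] [IsProbabilityMeasure μ]
    (p' p'' p : G → ℝ)
    (hp'cont : Continuous p') (hp''cont : Continuous p'') (hpcont : Continuous p)
    (hp'central : ∀ x y : G, p' (x * y) = p' (y * x))
    (hp''central : ∀ x y : G, p'' (x * y) = p'' (y * x))
    (hpcentral : ∀ x y : G, p (x * y) = p (y * x))
    (hsemi1 : ∀ g h : G, ∫ x, p' (g * x) * p' (x⁻¹ * h) ∂μ = p'' (g * h))
    (hsemi2 : ∀ g h : G, ∫ x, p'' (g * x) * p'' (x⁻¹ * h) ∂μ = p (g * h))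
    (G₁ G₂ G₃ G₄ H₁ H₂ H₃ : G) :
    (∫ g₁, ∫ g₂, ∫ g₃, ∫ g₄, ∫ y₁, ∫ y₂, ∫ y₃, ∫ y₄, ∫ z₁, ∫ z₂, ∫ z₃, ∫ z₄, ∫ h₁, ∫ h₂, ∫ h₃,
        p' (g₁ * y₁ * y₄⁻¹ * g₄ * G₄⁻¹) * p' (g₁⁻¹ * G₁ * G₂ * g₂⁻¹ * y₂⁻¹ * y₁⁻¹) *
          p' (y₄ * y₃ * g₃ * G₃⁻¹ * g₄⁻¹) * p' (y₂ * g₂ * g₃⁻¹ * y₃⁻¹) *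
          p' (h₁ * z₁ * z₄⁻¹ * g₂ * G₂⁻¹) * p' (h₁⁻¹ * H₁ * H₂ * h₂⁻¹ * z₂⁻¹ * z₁⁻¹) *
          p' (z₄ * z₃ * h₃ * H₃⁻¹ * g₂⁻¹) * p' (z₂ * h₂ * h₃⁻¹ * z₃⁻¹)
        ∂μ ∂μ ∂μ ∂μ ∂μ ∂μ ∂μ ∂μ ∂μ ∂μ ∂μ ∂μ ∂μ ∂μ ∂μ) =
      p (G₃⁻¹ * G₄⁻¹ * G₁ * G₂) * p (H₃⁻¹ * G₂⁻¹ * H₁ * H₂) :=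
  two_contiguous_plaquettes_subdivision_consistency_general μ p' p'' p hp'cont hp''cont hp'central
    hsemi1 hsemi2 G₁ G₂ G₃ G₄ H₁ H₂ H₃
end

section
/- Let G be a compact Hausdorff topological group with normalized Haar probability measure μ_H, and let (p_t)_{t>0} be a family of continuous central functions p_t : G → ℝ forming a convolution semigroup: ∫ p_s(gx) p_t(x⁻¹h) dμ_H(x) = p_{s+t}(gh) for all s, t > 0 and g, h ∈ G. Then for every β > 0 and all G₁, G₂, G₃, G₄ ∈ G, ∫∫∫∫ p_{β/4}(X₁X₄⁻¹G₄⁻¹) · p_{β/4}(X₁⁻¹G₁G₂X₂) · p_{β/4}(X₃G₃⁻¹X₄) · p_{β/4}(X₂⁻¹X₃⁻¹) dμ_H(X₁) dμ_H(X₂) dμ_H(X₃) dμ_H(X₄) = p_β(G₃⁻¹G₄⁻¹G₁G₂). (Subdivision of one plaquette of parameter β into four plaquettes requires the replacement β → β/4.) -/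
/-!
Every interior edge variable occurs in exactly two of the four plaquettes, once as `X` and once
as `X⁻¹`. Centrality rotates both plaquette words so that the semigroup identity applies, which
glues the two plaquettes into one of parameter `s + t`. Integrating out `X₄`, `X₃`, `X₂` in turn
leaves a single plaquette of parameter `β` whose word is the conjugate by `X₁` of a cyclic
rotation of `G₃⁻¹ G₄⁻¹ G₁ G₂`, so the last integrand is constant and `μ` is a probability measure.
-/

open MeasureTheory

structure IsCentralConvolutionSemigroup {G : Type*} [Group G] [MeasurableSpace G]
    (μ : Measure G) (p : ℝ → G → ℝ) : Prop where
  central : ∀ t, 0 < t → ∀ x y : G, p t (x * y) = p t (y * x)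
  conv : ∀ s t, 0 < s → 0 < t →
    ∀ g h : G, ∫ x, p s (g * x) * p t (x⁻¹ * h) ∂μ = p (s + t) (g * h)

namespace IsCentralConvolutionSemigroup

variable {G : Type*} [Group G] [MeasurableSpace G] {μ : Measure G} {p : ℝ → G → ℝ} {s t : ℝ}

theorem apply_conj (hp : IsCentralConvolutionSemigroup μ p) (ht : 0 < t) (g x : G) :
    p t (g⁻¹ * x * g) = p t x := by
  rw [hp.central t ht, mul_inv_cancel_left]

theorem integral_apply_mul_apply_inv (hp : IsCentralConvolutionSemigroup μ p) (hs : 0 < s)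
    (ht : 0 < t) (a b c d : G) :
    ∫ x, p s (a * x * b) * p t (c * x⁻¹ * d) ∂μ = p (s + t) (b * a * (d * c)) := by
  have hrot (x : G) : p s (a * x * b) * p t (c * x⁻¹ * d) =
      p s (b * a * x) * p t (x⁻¹ * (d * c)) := by
    rw [hp.central s hs, hp.central t ht, ← mul_assoc b, ← mul_assoc d, hp.central t ht (d * c)]
  simp_rw [hrot, hp.conv s t hs ht]

end IsCentralConvolutionSemigroup

theorem plaquette_subdivision_beta_quarter_general
    {G : Type*} [Group G] [MeasurableSpace G]
    (μ : Measure G) [IsProbabilityMeasure μ]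
    (p : ℝ → G → ℝ)
    (hpcentral : ∀ t : ℝ, 0 < t → ∀ x y : G, p t (x * y) = p t (y * x))
    (hsemi : ∀ s t : ℝ, 0 < s → 0 < t →
      ∀ g h : G, ∫ x, p s (g * x) * p t (x⁻¹ * h) ∂μ = p (s + t) (g * h))
    (β : ℝ) (hβ : 0 < β) (G₁ G₂ G₃ G₄ : G) :
    (∫ X₁, ∫ X₂, ∫ X₃, ∫ X₄,
        p (β / 4) (X₁ * X₄⁻¹ * G₄⁻¹) * p (β / 4) (X₁⁻¹ * G₁ * G₂ * X₂) *
          p (β / 4) (X₃ * G₃⁻¹ * X₄) * p (β / 4) (X₂⁻¹ * X₃⁻¹) ∂μ ∂μ ∂μ ∂μ) =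
      p β (G₃⁻¹ * G₄⁻¹ * G₁ * G₂) := by
  have hp : IsCentralConvolutionSemigroup μ p := ⟨hpcentral, hsemi⟩
  set q := β / 4 with hq_def
  have hq : 0 < q := by positivity
  have glue₄ (X₁ X₃ : G) : ∫ X₄, p q (X₃ * G₃⁻¹ * X₄) * p q (X₁ * X₄⁻¹ * G₄⁻¹) ∂μ =
      p (q + q) (X₃ * (G₃⁻¹ * (G₄⁻¹ * X₁))) := by
    simpa [mul_assoc] using hp.integral_apply_mul_apply_inv hq hq (X₃ * G₃⁻¹) 1 X₁ G₄⁻¹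
  have glue₃ (X₁ X₂ : G) :
      ∫ X₃, p (q + q) (X₃ * (G₃⁻¹ * (G₄⁻¹ * X₁))) * p q (X₂⁻¹ * X₃⁻¹) ∂μ =
        p (q + q + q) (G₃⁻¹ * (G₄⁻¹ * X₁) * X₂⁻¹) := by
    simpa [mul_assoc] using
      hp.integral_apply_mul_apply_inv (by positivity) hq 1 (G₃⁻¹ * (G₄⁻¹ * X₁)) X₂⁻¹ 1
  have glue₂ (X₁ : G) :
      ∫ X₂, p q (X₁⁻¹ * G₁ * G₂ * X₂) * p (q + q + q) (G₃⁻¹ * (G₄⁻¹ * X₁) * X₂⁻¹) ∂μ =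
        p β (X₁⁻¹ * (G₁ * G₂ * (G₃⁻¹ * G₄⁻¹)) * X₁) := by
    have hβq : q + (q + q + q) = β := by rw [hq_def]; ring
    simpa [mul_assoc, hβq] using hp.integral_apply_mul_apply_inv (t := q + q + q) hq
      (by positivity) (X₁⁻¹ * G₁ * G₂) 1 (G₃⁻¹ * (G₄⁻¹ * X₁)) 1
  calc
    _ = ∫ X₁, ∫ X₂, p q (X₁⁻¹ * G₁ * G₂ * X₂) * ∫ X₃, p q (X₂⁻¹ * X₃⁻¹) *
          ∫ X₄, p q (X₃ * G₃⁻¹ * X₄) * p q (X₁ * X₄⁻¹ * G₄⁻¹) ∂μ ∂μ ∂μ ∂μ := by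
      simp_rw [← integral_const_mul]
      congr! 8 with X₁ X₂ X₃ X₄
      ring
    _ = p β (G₁ * G₂ * (G₃⁻¹ * G₄⁻¹)) := by
      simp_rw [glue₄, mul_comm (p q (_ * _⁻¹)), glue₃, glue₂, hp.apply_conj hβ]
      simp
    _ = p β (G₃⁻¹ * G₄⁻¹ * G₁ * G₂) := by rw [hp.central β hβ, ← mul_assoc]

/-- **Subdivision of one plaquette of parameter `β` into four plaquettes requires the
replacement `β → β/4`.**  For a compact Hausdorff topological group `G` with normalized Haar
probability measure `μ`, and a convolution semigroup `(p t)_{t>0}` of continuous central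
functions (such as the heat kernel on a compact Lie group), the integral over the four interior
edge variables of the product of the four `β/4`-plaquette densities equals
`p β (G₃⁻¹ G₄⁻¹ G₁ G₂)`. -/
theorem plaquette_subdivision_beta_quarter
    {G : Type*} [Group G] [TopologicalSpace G] [IsTopologicalGroup G]
    [CompactSpace G] [T2Space G] [MeasurableSpace G] [BorelSpace G]
    (μ : Measure G) [μ.IsHaarMeasure] [IsProbabilityMeasure μ]
    (p : ℝ → G → ℝ)
    (hpcont : ∀ t : ℝ, 0 < t → Continuous (p t))
    (hpcentral : ∀ t : ℝ, 0 < t → ∀ x y : G, p t (x * y) = p t (y * x))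
    (hsemi : ∀ s t : ℝ, 0 < s → 0 < t →
      ∀ g h : G, ∫ x, p s (g * x) * p t (x⁻¹ * h) ∂μ = p (s + t) (g * h))
    (β : ℝ) (hβ : 0 < β) (G₁ G₂ G₃ G₄ : G) :
    (∫ X₁, ∫ X₂, ∫ X₃, ∫ X₄,
        p (β / 4) (X₁ * X₄⁻¹ * G₄⁻¹) * p (β / 4) (X₁⁻¹ * G₁ * G₂ * X₂) *
          p (β / 4) (X₃ * G₃⁻¹ * X₄) * p (β / 4) (X₂⁻¹ * X₃⁻¹) ∂μ ∂μ ∂μ ∂μ) =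
      p β (G₃⁻¹ * G₄⁻¹ * G₁ * G₂) :=
  plaquette_subdivision_beta_quarter_general μ p hpcentral hsemi β hβ G₁ G₂ G₃ G₄
end

section
/- Let G be a compact Hausdorff topological group with normalized Haar probability measure μ_H, and let p', p'', p : G → ℝ be continuous central functions satisfying the semigroup conditions. Then for all G₁, G₂, G₃, G₄ ∈ G and all φ₁, φ₂, φ₃, φ₄, φ̄₁, φ̄₂, φ̄₃, φ̄₄ ∈ G, ∫∫∫∫ p'(φ̄₁Y₁Y₄⁻¹G₄⁻¹φ₁) · p'(Y₁⁻¹G₁φ₂φ̄₂Y₂) · p'(Y₄Y₃⁻¹G₃⁻¹φ₄φ̄₄) · p'(Y₂⁻¹G₂φ₃φ̄₃Y₃) dμ_H(Y₁) dμ_H(Y₂) dμ_H(Y₃) dμ_H(Y₄) = p(G₄⁻¹φ₁φ̄₁G₁φ₂φ̄₂G₂φ₃φ̄₃G₃⁻¹φ₄φ̄₄). (One-plaquette consistency of the lattice measure in the presence of matter fields attached to the vertices.) -/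
/-!
Read `p' (y⁻¹ * a * z)` as a kernel from the vertex `y` to the vertex `z` along an edge labelled
`a`. The semigroup conditions say that composing two such kernels multiplies the labels and
passes from `p'` to `p''`, and from `p''` to `p`. Integrating out the four vertices therefore
contracts the cycle of kernels around the plaquette to `p` of a conjugate of the product of the
four labels, and centrality of `p` removes the conjugation. Centrality of `p'` brings the given
integrand into kernel form. The nesting of the integrals forces one exchange of two of them
(Fubini for continuous functions on a compact group).
-/

open MeasureTheory

section Kernel

variable {G : Type*} [Group G]

theorem apply_inv_mul_mul_of_central {s : G → ℝ} (hs : ∀ x y : G, s (x * y) = s (y * x))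
    (g x : G) : s (g⁻¹ * x * g) = s x := by
  rw [hs, mul_inv_cancel_left]

variable [MeasurableSpace G] {μ : Measure G} {q r : G → ℝ}

theorem integral_kernel_comp (hqr : ∀ g h : G, ∫ x, q (g * x) * q (x⁻¹ * h) ∂μ = r (g * h))
    (y z a b : G) :
    ∫ x, q (y⁻¹ * a * x) * q (x⁻¹ * b * z) ∂μ = r (y⁻¹ * (a * b) * z) := by
  simpa only [mul_assoc] using hqr (y⁻¹ * a) (b * z)

variable [TopologicalSpace G] [IsTopologicalGroup G] [CompactSpace G] [OpensMeasurableSpace G]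
  [IsProbabilityMeasure μ] {s : G → ℝ}

theorem integral_kernel_cycle (hq : Continuous q) (hr : Continuous r)
    (hs : ∀ x y : G, s (x * y) = s (y * x))
    (hqr : ∀ g h : G, ∫ x, q (g * x) * q (x⁻¹ * h) ∂μ = r (g * h))
    (hrs : ∀ g h : G, ∫ x, r (g * x) * r (x⁻¹ * h) ∂μ = s (g * h)) (c₁ c₂ c₃ c₄ : G) :
    (∫ Y₁, ∫ Y₂, ∫ Y₃, ∫ Y₄,
        q (Y₄⁻¹ * c₁ * Y₁) * q (Y₁⁻¹ * c₂ * Y₂) * q (Y₂⁻¹ * c₃ * Y₃) * q (Y₃⁻¹ * c₄ * Y₄)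
          ∂μ ∂μ ∂μ ∂μ) = s (c₁ * c₂ * c₃ * c₄) := by
  have hY₄ : ∀ Y₁ Y₂ Y₃ : G, (∫ Y₄,
      q (Y₄⁻¹ * c₁ * Y₁) * q (Y₁⁻¹ * c₂ * Y₂) * q (Y₂⁻¹ * c₃ * Y₃) * q (Y₃⁻¹ * c₄ * Y₄) ∂μ) =
        q (Y₁⁻¹ * c₂ * Y₂) * q (Y₂⁻¹ * c₃ * Y₃) * r (Y₃⁻¹ * (c₄ * c₁) * Y₁) := by
    intro Y₁ Y₂ Y₃
    rw [← integral_kernel_comp hqr, ← integral_const_mul]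
    congr 1 with Y₄
    ring
  have hY₂ : ∀ Y₁ Y₃ : G, (∫ Y₂,
      q (Y₁⁻¹ * c₂ * Y₂) * q (Y₂⁻¹ * c₃ * Y₃) * r (Y₃⁻¹ * (c₄ * c₁) * Y₁) ∂μ) =
        r (Y₁⁻¹ * (c₂ * c₃) * Y₃) * r (Y₃⁻¹ * (c₄ * c₁) * Y₁) := by
    intro Y₁ Y₃
    rw [integral_mul_const, integral_kernel_comp hqr]
  have hswap : ∀ Y₁ : G,
      (∫ Y₂, ∫ Y₃, q (Y₁⁻¹ * c₂ * Y₂) * q (Y₂⁻¹ * c₃ * Y₃) * r (Y₃⁻¹ * (c₄ * c₁) * Y₁) ∂μ ∂μ) =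
        ∫ Y₃, ∫ Y₂, q (Y₁⁻¹ * c₂ * Y₂) * q (Y₂⁻¹ * c₃ * Y₃) * r (Y₃⁻¹ * (c₄ * c₁) * Y₁) ∂μ ∂μ :=
    fun Y₁ ↦ integral_integral_swap_of_hasCompactSupport (by fun_prop)
      (HasCompactSupport.of_compactSpace _)
  have hY₃ : ∀ Y₁ : G,
      (∫ Y₃, r (Y₁⁻¹ * (c₂ * c₃) * Y₃) * r (Y₃⁻¹ * (c₄ * c₁) * Y₁) ∂μ) =
        s (c₁ * c₂ * c₃ * c₄) := by
    intro Y₁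
    rw [integral_kernel_comp hrs, apply_inv_mul_mul_of_central hs, ← mul_assoc, hs]
    simp only [mul_assoc]
  simp only [hY₄, hswap, hY₂, hY₃, integral_const, probReal_univ, one_smul]

end Kernel

theorem plaquette_subdivision_consistency_with_matter_general
    {G : Type*} [Group G] [TopologicalSpace G] [IsTopologicalGroup G]
    [CompactSpace G] [MeasurableSpace G] [BorelSpace G]
    (μ : Measure G) [IsProbabilityMeasure μ]
    (p' p'' p : G → ℝ)
    (hp'cont : Continuous p') (hp''cont : Continuous p'')
    (hp'central : ∀ x y : G, p' (x * y) = p' (y * x))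
    (hpcentral : ∀ x y : G, p (x * y) = p (y * x))
    (hsemi1 : ∀ g h : G, ∫ x, p' (g * x) * p' (x⁻¹ * h) ∂μ = p'' (g * h))
    (hsemi2 : ∀ g h : G, ∫ x, p'' (g * x) * p'' (x⁻¹ * h) ∂μ = p (g * h))
    (G₁ G₂ G₃ G₄ φ₁ φ₂ φ₃ φ₄ ψ₁ ψ₂ ψ₃ ψ₄ : G) :
    (∫ Y₁, ∫ Y₂, ∫ Y₃, ∫ Y₄,
        p' (ψ₁ * Y₁ * Y₄⁻¹ * G₄⁻¹ * φ₁) * p' (Y₁⁻¹ * G₁ * φ₂ * ψ₂ * Y₂) *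
          p' (Y₄ * Y₃⁻¹ * G₃⁻¹ * φ₄ * ψ₄) * p' (Y₂⁻¹ * G₂ * φ₃ * ψ₃ * Y₃) ∂μ ∂μ ∂μ ∂μ) =
      p (G₄⁻¹ * φ₁ * ψ₁ * G₁ * φ₂ * ψ₂ * G₂ * φ₃ * ψ₃ * G₃⁻¹ * φ₄ * ψ₄) := by
  have hintegrand : ∀ Y₁ Y₂ Y₃ Y₄ : G,
      p' (ψ₁ * Y₁ * Y₄⁻¹ * G₄⁻¹ * φ₁) * p' (Y₁⁻¹ * G₁ * φ₂ * ψ₂ * Y₂) *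
          p' (Y₄ * Y₃⁻¹ * G₃⁻¹ * φ₄ * ψ₄) * p' (Y₂⁻¹ * G₂ * φ₃ * ψ₃ * Y₃) =
        p' (Y₄⁻¹ * (G₄⁻¹ * φ₁ * ψ₁) * Y₁) * p' (Y₁⁻¹ * (G₁ * φ₂ * ψ₂) * Y₂) *
          p' (Y₂⁻¹ * (G₂ * φ₃ * ψ₃) * Y₃) * p' (Y₃⁻¹ * (G₃⁻¹ * φ₄ * ψ₄) * Y₄) := by
    intro Y₁ Y₂ Y₃ Y₄
    have hA := hp'central (ψ₁ * Y₁) (Y₄⁻¹ * G₄⁻¹ * φ₁)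
    have hD := hp'central Y₄ (Y₃⁻¹ * G₃⁻¹ * φ₄ * ψ₄)
    simp only [mul_assoc] at hA hD ⊢
    rw [hA, hD]
    ring
  simp only [hintegrand]
  rw [integral_kernel_cycle hp'cont hp''cont hpcentral hsemi1 hsemi2]
  simp only [mul_assoc]

/-- **One-plaquette consistency of the lattice measure in the presence of matter fields.**
For a compact Hausdorff topological group `G` with normalized Haar probability measure `μ`,
continuous central functions `p', p'', p : G → ℝ` satisfying the semigroup conditions, edge
variables `G₁, G₂, G₃, G₄` and matter-field group elements `φᵢ` and `ψᵢ` (the latter standing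
for `φ̄ᵢ`) at the vertices, the integral over the four interior variables `Y₁, Y₂, Y₃, Y₄` of
the product of the four small-plaquette fermion-string densities reproduces the
large-plaquette density. -/
theorem plaquette_subdivision_consistency_with_matter
    {G : Type*} [Group G] [TopologicalSpace G] [IsTopologicalGroup G]
    [CompactSpace G] [T2Space G] [MeasurableSpace G] [BorelSpace G]
    (μ : Measure G) [μ.IsHaarMeasure] [IsProbabilityMeasure μ]
    (p' p'' p : G → ℝ)
    (hp'cont : Continuous p') (hp''cont : Continuous p'') (hpcont : Continuous p)
    (hp'central : ∀ x y : G, p' (x * y) = p' (y * x))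
    (hp''central : ∀ x y : G, p'' (x * y) = p'' (y * x))
    (hpcentral : ∀ x y : G, p (x * y) = p (y * x))
    (hsemi1 : ∀ g h : G, ∫ x, p' (g * x) * p' (x⁻¹ * h) ∂μ = p'' (g * h))
    (hsemi2 : ∀ g h : G, ∫ x, p'' (g * x) * p'' (x⁻¹ * h) ∂μ = p (g * h))
    (G₁ G₂ G₃ G₄ φ₁ φ₂ φ₃ φ₄ ψ₁ ψ₂ ψ₃ ψ₄ : G) :
    (∫ Y₁, ∫ Y₂, ∫ Y₃, ∫ Y₄,
        p' (ψ₁ * Y₁ * Y₄⁻¹ * G₄⁻¹ * φ₁) * p' (Y₁⁻¹ * G₁ * φ₂ * ψ₂ * Y₂) *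
          p' (Y₄ * Y₃⁻¹ * G₃⁻¹ * φ₄ * ψ₄) * p' (Y₂⁻¹ * G₂ * φ₃ * ψ₃ * Y₃) ∂μ ∂μ ∂μ ∂μ) =
      p (G₄⁻¹ * φ₁ * ψ₁ * G₁ * φ₂ * ψ₂ * G₂ * φ₃ * ψ₃ * G₃⁻¹ * φ₄ * ψ₄) :=
  plaquette_subdivision_consistency_with_matter_general μ p' p'' p hp'cont hp''cont hp'central
    hpcentral hsemi1 hsemi2 G₁ G₂ G₃ G₄ φ₁ φ₂ φ₃ φ₄ ψ₁ ψ₂ ψ₃ ψ₄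
end

section
/- Let (gᵢ)_{i∈ι} be a family of elements of SU(3), the group of 3×3 complex special unitary matrices. Then the centralizer {h ∈ SU(3) : h gᵢ = gᵢ h for all i} equals the center of SU(3) (the scalar matrices ωI with ω³ = 1) if and only if the family has no common eigenvector, i.e. there is no nonzero v ∈ ℂ³ such that for every i there exists λᵢ ∈ ℂ with gᵢ v = λᵢ v. (A lattice gauge configuration lies in the generic stratum exactly when its link variables have no common eigenspace.) -/
/-!
If `v` is a common eigenvector of the unitary matrices `gᵢ`, then `v` is also an eigenvector of
every `gᵢᴴ`, so each `gᵢ` commutes with the orthogonal projection `P` onto `ℂ v`. The matrix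
`h = I • (1 + (I - 1) • P)`, which is `-1` on `v` and `I` on `v^⊥`, then lies in `SU(3)`, commutes
with every `gᵢ` and is not central.

Conversely, if `h` commutes with every `gᵢ` and `μ` is an eigenvalue of `h`, the kernel and the
range of `h - μ` are invariant under every `gᵢ`. Their dimensions add up to `3`, so unless
`h = μ`, one of them is a line, spanned by a common eigenvector. Finally, a scalar matrix `ω • 1`
lies in `SU(3)` exactly when `ω ^ 3 = 1`.
-/

open Matrix Module
open scoped ComplexOrder

theorem IsStarProjection.one_add_sub_one_smul_mem_unitary {𝕜 R : Type*} [CommRing 𝕜] [StarRing 𝕜]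
    [Ring R] [StarRing R] [Algebra 𝕜 R] [StarModule 𝕜 R] {p : R} (hp : IsStarProjection p)
    {u : 𝕜} (hu : u ∈ unitary 𝕜) : 1 + (u - 1) • p ∈ unitary R := by
  have hpp : p * p = p := hp.isIdempotentElem.eq
  have hstar : star (1 + (u - 1) • p) = 1 + (star u - 1) • p := by
    simp [star_sub, hp.isSelfAdjoint.star_eq]
  rw [Unitary.mem_iff, hstar]
  have key : ∀ a b : 𝕜, (1 + a • p) * (1 + b • p) = 1 + (a + b + a * b) • p := by
    intro a b
    simp only [add_mul, mul_add, one_mul, mul_one, smul_mul_smul_comm, hpp]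
    module
  rw [key, key]
  have h1 : star u * u = 1 := Unitary.star_mul_self_of_mem hu
  have h2 : u * star u = 1 := Unitary.mul_star_self_of_mem hu
  constructor
  · rw [show star u - 1 + (u - 1) + (star u - 1) * (u - 1) = star u * u - 1 by ring, h1]; simp
  · rw [show u - 1 + (star u - 1) + (u - 1) * (star u - 1) = u * star u - 1 by ring, h2]; simp

section LineProjection

variable {𝕜 n : Type*} [RCLike 𝕜] [Fintype n]

noncomputable def lineProjection (v : n → 𝕜) : Matrix n n 𝕜 :=
  (star v ⬝ᵥ v)⁻¹ • vecMulVec v (star v)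

variable {v : n → 𝕜}

theorem star_dotProduct_self_ne_zero (hv : v ≠ 0) : star v ⬝ᵥ v ≠ 0 :=
  dotProduct_star_self_eq_zero.not.mpr hv

theorem lineProjection_mulVec_self (hv : v ≠ 0) : lineProjection v *ᵥ v = v := by
  rw [lineProjection, smul_mulVec, vecMulVec_mulVec, op_smul_eq_smul, smul_smul,
    inv_mul_cancel₀ (star_dotProduct_self_ne_zero hv), one_smul]

theorem isStarProjection_lineProjection (hv : v ≠ 0) : IsStarProjection (lineProjection v) where
  isIdempotentElem := by
    rw [IsIdempotentElem, lineProjection, smul_mul_smul_comm, vecMulVec_mul_vecMulVec,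
      vecMulVec_smul, smul_smul, mul_assoc, inv_mul_cancel₀ (star_dotProduct_self_ne_zero hv),
      mul_one]
  isSelfAdjoint := by
    rw [IsSelfAdjoint, lineProjection, star_smul, star_inv₀, star_eq_conjTranspose,
      conjTranspose_vecMulVec, star_star, ← star_dotProduct]

theorem det_one_add_smul_lineProjection [DecidableEq n] (hv : v ≠ 0) (c : 𝕜) :
    det (1 + c • lineProjection v) = 1 + c := by
  rw [lineProjection, smul_smul, ← smul_vecMulVec, vecMulVec_eq Unit,
    det_one_add_replicateCol_mul_replicateRow, dotProduct_smul, smul_eq_mul, mul_assoc,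
    inv_mul_cancel₀ (star_dotProduct_self_ne_zero hv), mul_one]

theorem star_mulVec_eq_smul_of_mulVec_eq_smul [DecidableEq n] {g : Matrix n n 𝕜}
    (hg : g ∈ unitaryGroup n 𝕜) (hv : v ≠ 0) {lam : 𝕜} (hgv : g *ᵥ v = lam • v) :
    star g *ᵥ v = star lam • v := by
  have hgg : star g * g = 1 := mem_unitaryGroup_iff'.mp hg
  have hlam : star lam * lam = 1 := by
    have hnorm : star (g *ᵥ v) ⬝ᵥ (g *ᵥ v) = star v ⬝ᵥ v := by
      rw [star_mulVec, ← dotProduct_mulVec, mulVec_mulVec, ← star_eq_conjTranspose, hgg,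
        one_mulVec]
    rw [hgv, star_smul, smul_dotProduct, dotProduct_smul, smul_smul, smul_eq_mul] at hnorm
    exact mul_right_cancel₀ (star_dotProduct_self_ne_zero hv) (by rw [hnorm, one_mul])
  calc star g *ᵥ v = star lam • star g *ᵥ (lam • v) := by
        rw [mulVec_smul, smul_smul, hlam, one_smul]
    _ = star lam • v := by rw [← hgv, mulVec_mulVec, hgg, one_mulVec]

theorem commute_lineProjection [DecidableEq n] {g : Matrix n n 𝕜} (hg : g ∈ unitaryGroup n 𝕜)
    (hv : v ≠ 0) {lam : 𝕜} (hgv : g *ᵥ v = lam • v) : Commute g (lineProjection v) := by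
  have hvg : star v ᵥ* g = lam • star v :=
    calc star v ᵥ* g = star (star g *ᵥ v) := by
          rw [star_mulVec, star_eq_conjTranspose, conjTranspose_conjTranspose]
      _ = lam • star v := by
          rw [star_mulVec_eq_smul_of_mulVec_eq_smul hg hv hgv, star_smul, star_star]
  rw [Commute, SemiconjBy, lineProjection, mul_smul_comm, smul_mul_assoc, mul_vecMulVec,
    vecMulVec_mul, hgv, hvg, smul_vecMulVec, vecMulVec_smul]

end LineProjection

open Complex in
theorem exists_mem_specialUnitaryGroup_commute_mulVec_eq_neg {ι : Type*}
    {g : ι → Matrix (Fin 3) (Fin 3) ℂ} (hg : ∀ i, g i ∈ unitaryGroup (Fin 3) ℂ)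
    {v : Fin 3 → ℂ} (hv : v ≠ 0) (hgv : ∀ i, ∃ lam : ℂ, g i *ᵥ v = lam • v) :
    ∃ h ∈ specialUnitaryGroup (Fin 3) ℂ, (∀ i, Commute h (g i)) ∧ h *ᵥ v = -v := by
  have hP := isStarProjection_lineProjection hv
  have hI : I ∈ unitary ℂ := by simp [Unitary.mem_iff]
  refine ⟨I • (1 + (I - 1) • lineProjection v), ?_, fun i => ?_, ?_⟩
  · rw [mem_specialUnitaryGroup_iff, det_smul, det_one_add_smul_lineProjection hv,
      Fintype.card_fin]
    refine ⟨Unitary.smul_mem_of_mem hI (hP.one_add_sub_one_smul_mem_unitary hI), ?_⟩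
    linear_combination (I ^ 2 - 1) * I_sq
  · obtain ⟨lam, hlam⟩ := hgv i
    exact ((Commute.one_left _).add_left
      ((commute_lineProjection (hg i) hv hlam).symm.smul_left _)).smul_left _
  · rw [smul_mulVec, add_mulVec, one_mulVec, smul_mulVec, lineProjection_mulVec_self hv,
      show v + (I - 1) • v = I • v by module, smul_smul, I_mul_I, neg_one_smul]

theorem smul_one_mem_specialUnitaryGroup_iff {𝕜 n : Type*} [RCLike 𝕜] [Fintype n] [DecidableEq n]
    [Nonempty n] {ω : 𝕜} :
    ω • (1 : Matrix n n 𝕜) ∈ specialUnitaryGroup n 𝕜 ↔ ω ^ Fintype.card n = 1 := by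
  rw [mem_specialUnitaryGroup_iff, mem_unitaryGroup_iff, star_smul, star_one, smul_mul_smul_comm,
    one_mul, det_smul, det_one, mul_one]
  refine ⟨And.right, fun hω => ⟨?_, hω⟩⟩
  have hnorm : ‖ω‖ = 1 := by
    rw [← pow_eq_one_iff_of_nonneg (norm_nonneg ω) (Fintype.card_ne_zero (α := n)), ← norm_pow,
      hω, norm_one]
  rw [RCLike.star_def, RCLike.mul_conj, hnorm]
  simp

section CommonEigenvector

variable {ι K n : Type*} [Field K] [Fintype n]

def HasCommonEigenvector (g : ι → Matrix n n K) : Prop :=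
  ∃ v : n → K, v ≠ 0 ∧ ∀ i, ∃ lam : K, g i *ᵥ v = lam • v

theorem hasCommonEigenvector_of_finrank_eq_one {g : ι → Matrix n n K} {W : Submodule K (n → K)}
    (hW : finrank K W = 1) (hgW : ∀ i, ∀ x ∈ W, g i *ᵥ x ∈ W) : HasCommonEigenvector g := by
  obtain ⟨⟨v, hvW⟩, hv, hspan⟩ := finrank_eq_one_iff'.mp hW
  refine ⟨v, fun h => hv (Subtype.ext h), fun i => ?_⟩
  obtain ⟨lam, hlam⟩ := hspan ⟨g i *ᵥ v, hgW i v hvW⟩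
  exact ⟨lam, congrArg Subtype.val hlam.symm⟩

theorem hasCommonEigenvector_of_commute_of_mulVec_eq_zero [DecidableEq n] (hn : Fintype.card n ≤ 3)
    {g : ι → Matrix n n K} {A : Matrix n n K} (hcomm : ∀ i, Commute A (g i)) (hA : A ≠ 0)
    {v : n → K} (hv : v ≠ 0) (hAv : A *ᵥ v = 0) : HasCommonEigenvector g := by
  have hdim : finrank K (LinearMap.range (toLin' A)) + finrank K (LinearMap.ker (toLin' A)) =
      Fintype.card n := by
    rw [LinearMap.finrank_range_add_finrank_ker, finrank_fintype_fun_eq_card]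
  have hrange : finrank K (LinearMap.range (toLin' A)) ≠ 0 := by
    rwa [Ne, Submodule.finrank_eq_zero, LinearMap.range_eq_bot, LinearEquiv.map_eq_zero_iff]
  have hker : finrank K (LinearMap.ker (toLin' A)) ≠ 0 := by
    rw [Ne, Submodule.finrank_eq_zero, ← Ne, Submodule.ne_bot_iff]
    exact ⟨v, by simpa using hAv, hv⟩
  obtain hW | hW : finrank K (LinearMap.range (toLin' A)) = 1 ∨
      finrank K (LinearMap.ker (toLin' A)) = 1 := by omega
  · refine hasCommonEigenvector_of_finrank_eq_one hW fun i _ ⟨y, hy⟩ => ⟨g i *ᵥ y, ?_⟩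
    rw [← hy, toLin'_apply, toLin'_apply, mulVec_mulVec, (hcomm i).eq, mulVec_mulVec]
  · refine hasCommonEigenvector_of_finrank_eq_one hW fun i x hx => ?_
    rw [LinearMap.mem_ker, toLin'_apply] at hx ⊢
    rw [mulVec_mulVec, (hcomm i).eq, ← mulVec_mulVec, hx, mulVec_zero]

theorem exists_eq_smul_one_of_commute_of_not_hasCommonEigenvector [DecidableEq n] [IsAlgClosed K]
    [Nonempty n] (hn : Fintype.card n ≤ 3) {g : ι → Matrix n n K} {h : Matrix n n K}
    (hcomm : ∀ i, Commute h (g i)) (hno : ¬ HasCommonEigenvector g) : ∃ μ : K, h = μ • 1 := by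
  obtain ⟨μ, hμ⟩ := Module.End.exists_eigenvalue (toLin' h)
  obtain ⟨v, hv⟩ := hμ.exists_hasEigenvector
  refine ⟨μ, sub_eq_zero.mp (by_contra fun hA => hno ?_)⟩
  refine hasCommonEigenvector_of_commute_of_mulVec_eq_zero hn
    (fun i => (hcomm i).sub_left ((Commute.one_left _).smul_left μ)) hA hv.2 ?_
  rw [sub_mulVec, smul_mulVec, one_mulVec, ← toLin'_apply, hv.apply_eq_smul, sub_self]

end CommonEigenvector

/-- **A lattice gauge configuration lies in the generic stratum exactly when its link
variables have no common eigenvector.**  For a family `(gᵢ)` of elements of `SU(3)`, the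
centralizer `{h ∈ SU(3) : h gᵢ = gᵢ h for all i}` equals the center of `SU(3)` (the scalar
matrices `ω I` with `ω³ = 1`) if and only if the family has no common eigenvector. -/
theorem su3_centralizer_eq_center_iff_no_common_eigenvector
    {ι : Type*} (g : ι → Matrix (Fin 3) (Fin 3) ℂ)
    (hg : ∀ i, g i ∈ Matrix.specialUnitaryGroup (Fin 3) ℂ) :
    ({h : Matrix (Fin 3) (Fin 3) ℂ |
        h ∈ Matrix.specialUnitaryGroup (Fin 3) ℂ ∧ ∀ i, h * g i = g i * h} =
      {h : Matrix (Fin 3) (Fin 3) ℂ |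
        ∃ ω : ℂ, ω ^ 3 = 1 ∧ h = ω • (1 : Matrix (Fin 3) (Fin 3) ℂ)}) ↔
    ¬ ∃ v : Fin 3 → ℂ, v ≠ 0 ∧ ∀ i, ∃ lam : ℂ, (g i).mulVec v = lam • v := by
  change _ ↔ ¬ HasCommonEigenvector g
  constructor
  · rintro hcentralizer ⟨v, hv, hgv⟩
    obtain ⟨h, hSU, hcomm, hhv⟩ :=
      exists_mem_specialUnitaryGroup_commute_mulVec_eq_neg (fun i => (hg i).1) hv hgv
    obtain ⟨ω, hω, rfl⟩ := (Set.ext_iff.mp hcentralizer h).mp ⟨hSU, hcomm⟩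
    rw [smul_mulVec, one_mulVec, ← neg_one_smul ℂ v] at hhv
    have hω_neg : ω = -1 := smul_left_injective ℂ hv hhv
    norm_num [hω_neg] at hω
  · intro hno
    ext h
    refine ⟨fun ⟨hSU, hcomm⟩ => ?_, ?_⟩
    · obtain ⟨μ, rfl⟩ :=
        exists_eq_smul_one_of_commute_of_not_hasCommonEigenvector (by simp) hcomm hno
      exact ⟨μ, by simpa using smul_one_mem_specialUnitaryGroup_iff.mp hSU, rfl⟩
    · rintro ⟨ω, hω, rfl⟩
      exact ⟨smul_one_mem_specialUnitaryGroup_iff.mpr hω,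
        fun i => (Commute.one_left _).smul_left ω⟩
end
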